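/- An irreducible monic quadratic polynomial f ∈ ℤ[X] has two roots whose quotient is a primitive fourth root of unity (±i) if and only if f(X) = X^2 + 2aX + 2a^2 for some nonzero integer a. -/

import Mathlib

open Polynomial

/-!
If `α / β = ±i` then `α² + β² = 0` and `α ≠ β`, so by Vieta the coefficients of
`f = X² + bX + c` satisfy `b² - 2c = (α + β)² - 2αβ = α² + β² = 0`. Over `ℤ` this forces
`b = 2a`, `c = 2a²`, and `a ≠ 0` because `X²` is reducible. Conversely, the roots of
`X² + 2aX + 2a²` are `a(±i - 1)`, whose quotient is `±i`.
-/

theorem Polynomial.Monic.eq_X_sq_add_C_mul_X_add_C {R : Type*} [CommRing R] {f : R[X]}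
    (hm : f.Monic) (hdeg : f.natDegree = 2) :
    f = X ^ 2 + C (f.coeff 1) * X + C (f.coeff 0) := by
  have h2 : f.coeff 2 = 1 := hdeg ▸ hm.coeff_natDegree
  conv_lhs => rw [f.as_sum_range_C_mul_X_pow' (n := 3) (by omega)]
  simp only [Finset.sum_range_succ, Finset.sum_range_zero, h2, map_one]
  ring

theorem Polynomial.aeval_X_sq_add_C_mul_X_add_C {R A : Type*} [CommSemiring R] [CommSemiring A]
    [Algebra R A] (b c : R) (z : A) :
    aeval z (X ^ 2 + C b * X + C c) = z ^ 2 + algebraMap R A b * z + algebraMap R A c := by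
  simp only [map_add, map_pow, map_mul, aeval_X, aeval_C]

section Quadratic

variable {R : Type*} [CommRing R] [NoZeroDivisors R] {α β b c : R}

theorem add_add_eq_zero_of_quadratic_roots (hα : α ^ 2 + b * α + c = 0)
    (hβ : β ^ 2 + b * β + c = 0) (hne : α ≠ β) : α + β + b = 0 := by
  have hprod : (α - β) * (α + β + b) = 0 := by linear_combination hα - hβ
  exact (mul_eq_zero.mp hprod).resolve_left (sub_ne_zero.mpr hne)

theorem sq_eq_two_mul_of_quadratic_roots (hα : α ^ 2 + b * α + c = 0)
    (hβ : β ^ 2 + b * β + c = 0) (hne : α ≠ β) (hsq : α ^ 2 + β ^ 2 = 0) :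
    b ^ 2 = 2 * c := by
  have hsum := add_add_eq_zero_of_quadratic_roots hα hβ hne
  linear_combination (b + β - α) * hsum + hsq - 2 * hβ

end Quadratic

section DivSqEqNegOne

variable {K : Type*} [Field K] {α β : K}

theorem ne_zero_of_div_sq_eq_neg_one (h : (α / β) ^ 2 = -1) : β ≠ 0 := by
  rintro rfl
  simp at h

theorem sq_add_sq_eq_zero_of_div_sq_eq_neg_one (h : (α / β) ^ 2 = -1) : α ^ 2 + β ^ 2 = 0 := by
  have hβ := ne_zero_of_div_sq_eq_neg_one h
  rw [div_pow, div_eq_iff (pow_ne_zero 2 hβ)] at h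
  linear_combination h

theorem ne_of_div_sq_eq_neg_one [NeZero (2 : K)] (h : (α / β) ^ 2 = -1) : α ≠ β := by
  rintro rfl
  rw [div_self (ne_zero_of_div_sq_eq_neg_one h), one_pow] at h
  exact (two_ne_zero : (2 : K) ≠ 0) (by linear_combination h)

end DivSqEqNegOne

theorem Int.exists_eq_two_mul_of_sq_eq_two_mul {b c : ℤ} (h : b ^ 2 = 2 * c) :
    ∃ a, b = 2 * a ∧ c = 2 * a ^ 2 := by
  obtain ⟨a, rfl⟩ := Int.prime_two.dvd_of_dvd_pow (⟨c, h⟩ : (2 : ℤ) ∣ b ^ 2)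
  exact ⟨a, rfl, by linarith⟩

theorem aeval_mul_sub_one_eq_zero_of_sq_eq_neg_one {A : Type*} [CommRing A] {ε : A}
    (hε : ε ^ 2 = -1) (a : ℤ) :
    aeval ((a : A) * (ε - 1)) (X ^ 2 + C (2 * a) * X + C (2 * a ^ 2)) = 0 := by
  rw [aeval_X_sq_add_C_mul_X_add_C]
  simp only [eq_intCast]
  push_cast
  linear_combination (a : A) ^ 2 * hε

theorem Complex.neg_I_sub_one_div_I_sub_one : (-I - 1) / (I - 1) = I := by
  have hI : I - 1 ≠ 0 := fun h ↦ by simpa using congrArg re h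
  rw [div_eq_iff hI]
  linear_combination -I_sq

/-- An irreducible monic quadratic `f ∈ ℤ[X]` has two roots whose quotient is `±i` iff
`f(X) = X² + 2aX + 2a²` for some nonzero integer `a`. -/
theorem quotient_fourth_root_iff (f : Polynomial ℤ) (hm : f.Monic) (hdeg : f.natDegree = 2)
    (hirr : Irreducible (f.map (Int.castRingHom ℚ))) :
    (∃ α β : ℂ, Polynomial.aeval α f = 0 ∧ Polynomial.aeval β f = 0 ∧
      (α / β = Complex.I ∨ α / β = -Complex.I)) ↔
    ∃ a : ℤ, a ≠ 0 ∧ f = X ^ 2 + C (2 * a) * X + C (2 * a ^ 2) := by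
  constructor
  · rintro ⟨α, β, hα, hβ, hquot⟩
    have hsq : (α / β) ^ 2 = -1 := by rcases hquot with h | h <;> simp [h]
    have hform := hm.eq_X_sq_add_C_mul_X_add_C hdeg
    rw [hform, aeval_X_sq_add_C_mul_X_add_C] at hα hβ
    simp only [eq_intCast] at hα hβ
    obtain ⟨a, hb, hc⟩ := Int.exists_eq_two_mul_of_sq_eq_two_mul <| by
      exact_mod_cast sq_eq_two_mul_of_quadratic_roots hα hβ (ne_of_div_sq_eq_neg_one hsq)
        (sq_add_sq_eq_zero_of_div_sq_eq_neg_one hsq)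
    refine ⟨a, ?_, by rw [hform, hb, hc]⟩
    rintro rfl
    have hX : f = X ^ 2 := by rw [hform, hb, hc]; simp
    rw [hX, Polynomial.map_pow, map_X] at hirr
    exact not_irreducible_pow (by norm_num) hirr
  · rintro ⟨a, ha, rfl⟩
    have ha' : (a : ℂ) ≠ 0 := by exact_mod_cast ha
    refine ⟨a * (-Complex.I - 1), a * (Complex.I - 1),
      aeval_mul_sub_one_eq_zero_of_sq_eq_neg_one (by simp) a,
      aeval_mul_sub_one_eq_zero_of_sq_eq_neg_one Complex.I_sq a, Or.inl ?_⟩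
    rw [mul_div_mul_left _ _ ha', Complex.neg_I_sub_one_div_I_sub_one]
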